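/- Let A = (Q, {a₁, a₂, a₃}, δ) be a synchronizing DFA in which some shortest synchronizing word does not use the letter a₃ in every position (equivalently, after possibly swapping the names of a₂ and a₃, a shortest synchronizing word avoids being a power of a₃). Let B = (Q × {a₁,a₂,a₃}, {a,b}, δ') with δ'((q,a_i), a) = (q, a_{min(i+1,3)}), δ'((q,a_i), b) = (δ(q,a_i), a₁). Then min_synch(B) ≤ 3·min_synch(A): explicitly, if w = w[1]⋯w[ℓ] is a synchronizing word for A, then v = b·v₁⋯v_ℓ is a synchronizing word for B, where v_s = b if w[s] = a₁, v_s = ab if w[s] = a₂, v_s = aab if w[s] = a₃, and |v| = 1 + Σ|v_s| ≤ 3ℓ whenever not all letters of w equal a₃. -/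

import Mathlib

/-! The leading `b` resets the stored letter of every state of `B` to `a₁`, and from stored
letter `a₁` the block `v_s` moves the first component by `w[s]` and resets it again, so `B`
simulates `A` on `w`. The block for `aᵢ` has length `i`, so a letter other than `a₃` pays
for the leading `b`. -/

/-- The two-letter alphabet {a, b}. -/
inductive Letter2 where
  | a | b
deriving DecidableEq

/-- Extension of a transition function to words (left-to-right action). -/
def runW {Q A : Type*} (δ : Q → A → Q) : Q → List A → Q
  | q, [] => q
  | q, x :: w => runW δ (δ q x) w

/-- The 2-letter automaton B built from a 3-letter automaton A = (Q, {a₁,a₂,a₃}, δ):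
letter a advances the stored letter index (capped at 3 = index 2), letter b applies
the stored letter to the first component and resets the stored letter to a₁. -/
def deltaB {Q : Type*} (δ : Q → Fin 3 → Q) : Q × Fin 3 → Letter2 → Q × Fin 3
  | (q, i), Letter2.a => (q, ⟨min ((i : ℕ) + 1) 2, by omega⟩)
  | (q, i), Letter2.b => (δ q i, ⟨0, by omega⟩)

/-- The encoding of a letter of A as a word over {a,b}: a₁ ↦ b, a₂ ↦ ab, a₃ ↦ aab. -/
def codeLetter : Fin 3 → List Letter2
  | ⟨0, _⟩ => [Letter2.b]
  | ⟨1, _⟩ => [Letter2.a, Letter2.b]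
  | _ => [Letter2.a, Letter2.a, Letter2.b]

/-- The encoding of a word of A: w ↦ b·v₁⋯v_ℓ. -/
def codeWord (w : List (Fin 3)) : List Letter2 :=
  Letter2.b :: w.flatMap codeLetter

lemma runW_append {Q A : Type*} (δ : Q → A → Q) (q : Q) (u v : List A) :
    runW δ q (u ++ v) = runW δ (runW δ q u) v := by
  induction u generalizing q with
  | nil => rfl
  | cons x u ih => exact ih (δ q x)

lemma runW_deltaB_codeLetter {Q : Type*} (δ : Q → Fin 3 → Q) (q : Q) (j : Fin 3) :
    runW (deltaB δ) (q, 0) (codeLetter j) = (δ q j, 0) := by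
  fin_cases j <;> rfl

lemma runW_deltaB_flatMap_codeLetter {Q : Type*} (δ : Q → Fin 3 → Q) (q : Q)
    (w : List (Fin 3)) :
    runW (deltaB δ) (q, 0) (w.flatMap codeLetter) = (runW δ q w, 0) := by
  induction w generalizing q with
  | nil => rfl
  | cons j w ih =>
    rw [List.flatMap_cons, runW_append, runW_deltaB_codeLetter, ih]
    rfl

lemma runW_deltaB_codeWord {Q : Type*} (δ : Q → Fin 3 → Q) (q : Q) (i : Fin 3)
    (w : List (Fin 3)) :
    runW (deltaB δ) (q, i) (codeWord w) = (runW δ (δ q i) w, 0) :=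
  runW_deltaB_flatMap_codeLetter δ (δ q i) w

lemma length_codeLetter (j : Fin 3) : (codeLetter j).length = j + 1 := by
  fin_cases j <;> rfl

lemma length_flatMap_codeLetter_lt {w : List (Fin 3)} (h : ∃ s ∈ w, s ≠ 2) :
    (w.flatMap codeLetter).length < 3 * w.length := by
  have hlt : (w.map fun j => (codeLetter j).length).sum < (w.map fun _ => 3).sum :=
    List.sum_lt_sum _ _ (fun j _ => by rw [length_codeLetter]; omega)
      (h.imp fun j ⟨hj, hj2⟩ => ⟨hj, by rw [length_codeLetter]; omega⟩)
  simpa [List.length_flatMap, mul_comm] using hlt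

/-- If w is a shortest synchronizing word for A which does not consist solely of the
letter a₃, then the word b·v₁⋯v_ℓ synchronizes B and has length at most 3·|w|;
in particular min_synch(B) ≤ 3·min_synch(A). -/
theorem two_letter_reduction_upper
    {Q : Type*} (δ : Q → Fin 3 → Q) (w : List (Fin 3))
    (hsync : ∃ p : Q, ∀ q : Q, runW δ q w = p)
    (hnot3 : ∃ s ∈ w, s ≠ (⟨2, by omega⟩ : Fin 3)) :
    (∃ p' : Q × Fin 3, ∀ s : Q × Fin 3, runW (deltaB δ) s (codeWord w) = p') ∧
      (codeWord w).length ≤ 3 * w.length := by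
  obtain ⟨p, hp⟩ := hsync
  refine ⟨⟨(p, 0), fun ⟨q, i⟩ => by rw [runW_deltaB_codeWord, hp]⟩, ?_⟩
  exact length_flatMap_codeLetter_lt hnot3
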